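/- arXiv:2108.03572 — 4 statements merged into one kernel-verified Lean document; each statement's English description precedes it below -/
import Mathlib

section
/- There exists a 3-coloring of the edges of the complete bipartite graph K_{16,16} with colors red, blue, green containing no red K_{2,2}, no blue K_{2,2}, and no green K_{3,3}. -/
set_option maxHeartbeats 4000000

def myc : Fin 16 → Fin 16 → Fin 3 := fun x y =>
  let d : ℕ := ((y.val / 4 + 4 - x.val / 4) % 4) * 4 + ((y.val % 4 + 4 - x.val % 4) % 4)
  if d = 0 ∨ d = 1 ∨ d = 4 ∨ d = 15 then 0
  else if d = 2 ∨ d = 5 ∨ d = 6 ∨ d = 11 then 1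
  else 2

lemma myc_red : ∀ x x' y y' : Fin 16, x ≠ x' → y ≠ y' →
    ¬(myc x y = 0 ∧ myc x y' = 0 ∧ myc x' y = 0 ∧ myc x' y' = 0) := by decide

lemma myc_blue : ∀ x x' y y' : Fin 16, x ≠ x' → y ≠ y' →
    ¬(myc x y = 1 ∧ myc x y' = 1 ∧ myc x' y = 1 ∧ myc x' y' = 1) := by decide

lemma myc_green : ∀ y1 y2 y3 : Fin 16, y1 ≠ y2 → y1 ≠ y3 → y2 ≠ y3 →
    (Finset.univ.filter fun x => myc x y1 = 2 ∧ myc x y2 = 2 ∧ myc x y3 = 2).card ≤ 2 := by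
  decide

theorem stmt2 :
    ∃ c : Fin 16 → Fin 16 → Fin 3,
      ¬(∃ A B : Finset (Fin 16), A.card = 2 ∧ B.card = 2 ∧ ∀ x ∈ A, ∀ y ∈ B, c x y = 0) ∧
      ¬(∃ A B : Finset (Fin 16), A.card = 2 ∧ B.card = 2 ∧ ∀ x ∈ A, ∀ y ∈ B, c x y = 1) ∧
      ¬(∃ A B : Finset (Fin 16), A.card = 3 ∧ B.card = 3 ∧ ∀ x ∈ A, ∀ y ∈ B, c x y = 2) := by
  refine ⟨myc, ?_, ?_, ?_⟩
  · rintro ⟨A, B, hA, hB, h⟩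
    obtain ⟨x, x', hxx, rfl⟩ := Finset.card_eq_two.mp hA
    obtain ⟨y, y', hyy, rfl⟩ := Finset.card_eq_two.mp hB
    exact myc_red x x' y y' hxx hyy
      ⟨h x (by simp) y (by simp), h x (by simp) y' (by simp),
       h x' (by simp) y (by simp), h x' (by simp) y' (by simp)⟩
  · rintro ⟨A, B, hA, hB, h⟩
    obtain ⟨x, x', hxx, rfl⟩ := Finset.card_eq_two.mp hA
    obtain ⟨y, y', hyy, rfl⟩ := Finset.card_eq_two.mp hB
    exact myc_blue x x' y y' hxx hyy
      ⟨h x (by simp) y (by simp), h x (by simp) y' (by simp),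
       h x' (by simp) y (by simp), h x' (by simp) y' (by simp)⟩
  · rintro ⟨A, B, hA, hB, h⟩
    obtain ⟨y1, y2, y3, h12, h13, h23, rfl⟩ := Finset.card_eq_three.mp hB
    have hsub : A ⊆ Finset.univ.filter
        fun x => myc x y1 = 2 ∧ myc x y2 = 2 ∧ myc x y3 = 2 := by
      intro x hx
      simp only [Finset.mem_filter, Finset.mem_univ, true_and]
      exact ⟨h x hx y1 (by simp), h x hx y2 (by simp), h x hx y3 (by simp)⟩
    have := (Finset.card_le_card hsub).trans (myc_green y1 y2 y3 h12 h13 h23)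
    omega
end

section
/- Let c be a 3-coloring of the edges of K_{17,17} (colors red, blue, green) containing no red K_{2,2}, no blue K_{2,2}, and no green K_{3,3}. Let x₁ be a vertex of the first part X with green degree 9 and let Y₁ be its green neighborhood. Then for every vertex x of X with x ≠ x₁, the green neighborhood of x intersects Y₁ in at most 5 vertices. -/
open Finset

lemma aux_mulsub (n : ℕ) : n * (n - 1) = n * n - n := by
  cases n with
  | zero => simp
  | succ m =>
      have : (m + 1) * (m + 1) = (m + 1) * m + (m + 1) := by ring
      simp only [Nat.succ_sub_one]
      omega

lemma aux_dcount {α β : Type*} (W : Finset α) (S : Finset β)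
    (p : α → β → Prop) [∀ a b, Decidable (p a b)] :
    ∑ w ∈ W, (S.filter (p w)).card = ∑ s ∈ S, (W.filter (fun w => p w s)).card := by
  simp only [Finset.card_filter]
  exact Finset.sum_comm

lemma aux_offdiag_filter {β : Type*} [DecidableEq β] (S : Finset β) (q : β → Prop)
    [DecidablePred q] :
    (S.filter q).offDiag = S.offDiag.filter (fun p => q p.1 ∧ q p.2) := by
  ext ⟨a, b⟩
  simp only [Finset.mem_offDiag, Finset.mem_filter]
  tauto

lemma aux_pair_count {α β : Type*} [DecidableEq β] (W : Finset α) (S : Finset β)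
    (p : α → β → Prop) [∀ a b, Decidable (p a b)] (k : ℕ)
    (h : ∀ s ∈ S, ∀ t ∈ S, s ≠ t → (W.filter (fun w => p w s ∧ p w t)).card ≤ k) :
    ∑ w ∈ W, (S.filter (p w)).card * ((S.filter (p w)).card - 1)
      ≤ (S.card * S.card - S.card) * k := by
  have h1 : ∀ w, (S.filter (p w)).card * ((S.filter (p w)).card - 1)
      = ((S.offDiag.filter (fun q => p w q.1 ∧ p w q.2))).card := by
    intro w
    rw [← aux_offdiag_filter, Finset.offDiag_card, aux_mulsub]
  calc ∑ w ∈ W, (S.filter (p w)).card * ((S.filter (p w)).card - 1)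
      = ∑ w ∈ W, ((S.offDiag.filter (fun q => p w q.1 ∧ p w q.2))).card := by
        exact Finset.sum_congr rfl (fun w _ => h1 w)
    _ = ∑ q ∈ S.offDiag, (W.filter (fun w => p w q.1 ∧ p w q.2)).card := by
        exact aux_dcount W S.offDiag (fun w q => p w q.1 ∧ p w q.2)
    _ ≤ ∑ q ∈ S.offDiag, k := by
        refine Finset.sum_le_sum ?_
        rintro ⟨s, t⟩ hq
        rw [Finset.mem_offDiag] at hq
        exact h s hq.1 t hq.2.1 hq.2.2
    _ = (S.card * S.card - S.card) * k := by
        rw [Finset.sum_const, smul_eq_mul, Finset.offDiag_card]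

lemma aux_tricolor (S : Finset (Fin 17)) (f : Fin 17 → Fin 3) :
    (S.filter (fun y => f y = 0)).card + (S.filter (fun y => f y = 1)).card
      + (S.filter (fun y => f y = 2)).card = S.card := by
  simp only [Finset.card_filter, ← Finset.sum_add_distrib]
  rw [Finset.card_eq_sum_ones]
  refine Finset.sum_congr rfl (fun y _ => ?_)
  have : ∀ v : Fin 3, ((if v = 0 then 1 else 0) + (if v = 1 then 1 else 0))
      + (if v = 2 then 1 else 0) = 1 := by decide
  exact this (f y)

lemma aux_2n (n : ℕ) : 2 * n ≤ 2 + n * (n - 1) := by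
  rcases n with _ | m
  · omega
  · rcases m with _ | l
    · omega
    · have e : l + 1 + 1 - 1 = l + 1 := rfl
      rw [e]
      have : (l + 1 + 1) * (l + 1) = l * l + 3 * l + 2 := by ring
      omega

lemma aux_2n_eq (n : ℕ) (h : 2 * n = 2 + n * (n - 1)) : n = 1 ∨ n = 2 := by
  rcases n with _ | m
  · omega
  · rcases m with _ | l
    · omega
    · rw [show l + 1 + 1 - 1 = l + 1 from rfl] at h
      have : (l + 1 + 1) * (l + 1) = l * l + 3 * l + 2 := by ring
      omega

lemma aux_pack {α β : Type*} [DecidableEq α] [DecidableEq β] (S : Finset α) (T : Finset β)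
    (f : α → Finset β) (hsub : ∀ a ∈ S, f a ⊆ T) (hcard : ∀ a ∈ S, (f a).card = 2)
    (hdisj : ∀ a ∈ S, ∀ b ∈ S, a ≠ b → Disjoint (f a) (f b)) : 2 * S.card ≤ T.card := by
  have h1 : (S.biUnion f).card = ∑ a ∈ S, (f a).card := Finset.card_biUnion hdisj
  have h2 : S.biUnion f ⊆ T := Finset.biUnion_subset.mpr hsub
  have h3 := Finset.card_le_card h2
  rw [h1] at h3
  have h4 : ∑ a ∈ S, (f a).card = 2 * S.card := by
    rw [Finset.sum_congr rfl hcard, Finset.sum_const, smul_eq_mul, Nat.mul_comm]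
  omega
theorem stmt14 (c : Fin 17 → Fin 17 → Fin 3)
    (hr : ¬(∃ A B : Finset (Fin 17), A.card = 2 ∧ B.card = 2 ∧ ∀ x ∈ A, ∀ y ∈ B, c x y = 0))
    (hb : ¬(∃ A B : Finset (Fin 17), A.card = 2 ∧ B.card = 2 ∧ ∀ x ∈ A, ∀ y ∈ B, c x y = 1))
    (hg : ¬(∃ A B : Finset (Fin 17), A.card = 3 ∧ B.card = 3 ∧ ∀ x ∈ A, ∀ y ∈ B, c x y = 2))
    (x₁ : Fin 17) (Y₁ : Finset (Fin 17))
    (hY₁ : Y₁ = Finset.univ.filter (fun y : Fin 17 => c x₁ y = 2))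
    (hdeg : Y₁.card = 9) :
    ∀ x : Fin 17, x ≠ x₁ →
      ((Finset.univ.filter (fun y : Fin 17 => c x y = 2)) ∩ Y₁).card ≤ 5 := by
  intro x hx
  by_contra hcon
  push_neg at hcon
  have hx1g : ∀ y ∈ Y₁, c x₁ y = 2 := by
    intro y hy; rw [hY₁] at hy; exact (Finset.mem_filter.mp hy).2
  obtain ⟨T, hTsub, hTcard⟩ := Finset.exists_subset_card_eq
    (show 6 ≤ ((Finset.univ.filter (fun y : Fin 17 => c x y = 2)) ∩ Y₁).card from hcon)
  have hTx : ∀ y ∈ T, c x y = 2 := by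
    intro y hy
    have := hTsub hy
    rw [Finset.mem_inter, Finset.mem_filter] at this
    exact this.1.2
  have hTY : T ⊆ Y₁ := fun y hy => (Finset.mem_inter.mp (hTsub hy)).2
  have hUcard : (Y₁ \ T).card = 3 := by rw [Finset.card_sdiff_of_subset hTY]; omega
  have hUY : ∀ u ∈ Y₁ \ T, u ∈ Y₁ ∧ u ∉ T := fun u hu => Finset.mem_sdiff.mp hu
  have hWmem : ∀ w ∈ (Finset.univ.erase x₁).erase x, w ≠ x ∧ w ≠ x₁ := by
    intro w hw
    rw [Finset.mem_erase, Finset.mem_erase] at hw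
    exact ⟨hw.1, hw.2.1⟩
  have hWcard : ((Finset.univ.erase x₁).erase x).card = 15 := by
    rw [Finset.card_erase_of_mem (by simp [hx]), Finset.card_erase_of_mem (by simp)]
    simp
  -- specialized no-K22 / no-K33 facts
  have hr2 : ∀ w₁ w₂ y z : Fin 17, w₁ ≠ w₂ → y ≠ z →
      c w₁ y = 0 → c w₁ z = 0 → c w₂ y = 0 → c w₂ z = 0 → False := by
    intro w₁ w₂ y z hw hyz h1 h2 h3 h4
    refine hr ⟨{w₁, w₂}, {y, z}, Finset.card_pair hw, Finset.card_pair hyz, ?_⟩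
    intro a ha e he
    simp only [Finset.mem_insert, Finset.mem_singleton] at ha he
    rcases ha with rfl | rfl <;> rcases he with rfl | rfl <;> assumption
  have hb2 : ∀ w₁ w₂ y z : Fin 17, w₁ ≠ w₂ → y ≠ z →
      c w₁ y = 1 → c w₁ z = 1 → c w₂ y = 1 → c w₂ z = 1 → False := by
    intro w₁ w₂ y z hw hyz h1 h2 h3 h4
    refine hb ⟨{w₁, w₂}, {y, z}, Finset.card_pair hw, Finset.card_pair hyz, ?_⟩
    intro a ha e he
    simp only [Finset.mem_insert, Finset.mem_singleton] at ha he
    rcases ha with rfl | rfl <;> rcases he with rfl | rfl <;> assumption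
  have hg3 : ∀ (a₁ a₂ a₃ : Fin 17) (B : Finset (Fin 17)), a₁ ≠ a₂ → a₁ ≠ a₃ → a₂ ≠ a₃ →
      B.card = 3 → (∀ y ∈ B, c a₁ y = 2) → (∀ y ∈ B, c a₂ y = 2) →
      (∀ y ∈ B, c a₃ y = 2) → False := by
    intro a₁ a₂ a₃ B h12 h13 h23 hBc e1 e2 e3
    refine hg ⟨{a₁, a₂, a₃}, B, ?_, hBc, ?_⟩
    · rw [Finset.card_insert_of_notMem (by simp [h12, h13]), Finset.card_pair h23]
    · intro a ha y hy
      simp only [Finset.mem_insert, Finset.mem_singleton] at ha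
      rcases ha with rfl | rfl | rfl
      exacts [e1 y hy, e2 y hy, e3 y hy]
  -- row degree sums in T
  have hsum6 : ∀ w : Fin 17, (T.filter (fun y => c w y = 0)).card
      + (T.filter (fun y => c w y = 1)).card + (T.filter (fun y => c w y = 2)).card = 6 := by
    intro w; rw [aux_tricolor T (c w), hTcard]
  have hgle : ∀ w ∈ (Finset.univ.erase x₁).erase x, (T.filter (fun y => c w y = 2)).card ≤ 2 := by
    intro w hw
    by_contra hgt
    push_neg at hgt
    obtain ⟨Z, hZsub, hZcard⟩ := Finset.exists_subset_card_eq hgt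
    obtain ⟨hwx, hwx1⟩ := hWmem w hw
    exact hg3 x x₁ w Z hx (Ne.symm hwx) (Ne.symm hwx1) hZcard
      (fun y hy => hTx y (Finset.mem_of_mem_filter y (hZsub hy)))
      (fun y hy => hx1g y (hTY (Finset.mem_of_mem_filter y (hZsub hy))))
      (fun y hy => (Finset.mem_filter.mp (hZsub hy)).2)
  -- pair counts over T for red and blue
  have hSr : ∑ w ∈ (Finset.univ.erase x₁).erase x,
      (T.filter (fun y => c w y = 0)).card * ((T.filter (fun y => c w y = 0)).card - 1) ≤ 30 := by
    have h := aux_pair_count ((Finset.univ.erase x₁).erase x) T (fun w y => c w y = 0) 1 ?_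
    · rw [hTcard] at h; simpa using h
    · intro s hs t ht hst
      by_contra hgt
      push_neg at hgt
      obtain ⟨w₁, hw1, w₂, hw2, hne⟩ := Finset.one_lt_card.mp hgt
      rw [Finset.mem_filter] at hw1 hw2
      exact hr2 w₁ w₂ s t hne hst hw1.2.1 hw1.2.2 hw2.2.1 hw2.2.2
  have hSb : ∑ w ∈ (Finset.univ.erase x₁).erase x,
      (T.filter (fun y => c w y = 1)).card * ((T.filter (fun y => c w y = 1)).card - 1) ≤ 30 := by
    have h := aux_pair_count ((Finset.univ.erase x₁).erase x) T (fun w y => c w y = 1) 1 ?_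
    · rw [hTcard] at h; simpa using h
    · intro s hs t ht hst
      by_contra hgt
      push_neg at hgt
      obtain ⟨w₁, hw1, w₂, hw2, hne⟩ := Finset.one_lt_card.mp hgt
      rw [Finset.mem_filter] at hw1 hw2
      exact hb2 w₁ w₂ s t hne hst hw1.2.1 hw1.2.2 hw2.2.1 hw2.2.2
  -- sum of r, sum of b are each ≤ 30 and together ≥ 60
  have h2le : ∀ w ∈ (Finset.univ.erase x₁).erase x,
      2 * (T.filter (fun y => c w y = 0)).card ≤
        2 + (T.filter (fun y => c w y = 0)).card * ((T.filter (fun y => c w y = 0)).card - 1) :=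
    fun w _ => aux_2n _
  have h2leb : ∀ w ∈ (Finset.univ.erase x₁).erase x,
      2 * (T.filter (fun y => c w y = 1)).card ≤
        2 + (T.filter (fun y => c w y = 1)).card * ((T.filter (fun y => c w y = 1)).card - 1) :=
    fun w _ => aux_2n _
  have hSrle : ∑ w ∈ (Finset.univ.erase x₁).erase x, (T.filter (fun y => c w y = 0)).card ≤ 30 := by
    have h := Finset.sum_le_sum h2le
    rw [← Finset.mul_sum, Finset.sum_add_distrib, Finset.sum_const, hWcard, smul_eq_mul] at h
    omega
  have hSble : ∑ w ∈ (Finset.univ.erase x₁).erase x, (T.filter (fun y => c w y = 1)).card ≤ 30 := by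
    have h := Finset.sum_le_sum h2leb
    rw [← Finset.mul_sum, Finset.sum_add_distrib, Finset.sum_const, hWcard, smul_eq_mul] at h
    omega
  have hSrbge : 60 ≤ ∑ w ∈ (Finset.univ.erase x₁).erase x,
      ((T.filter (fun y => c w y = 0)).card + (T.filter (fun y => c w y = 1)).card) := by
    have h : ∀ w ∈ (Finset.univ.erase x₁).erase x,
        4 ≤ (T.filter (fun y => c w y = 0)).card + (T.filter (fun y => c w y = 1)).card := by
      intro w hw
      have := hsum6 w
      have := hgle w hw
      omega
    calc (60 : ℕ) = ∑ _w ∈ (Finset.univ.erase x₁).erase x, 4 := by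
          rw [Finset.sum_const, hWcard, smul_eq_mul]
      _ ≤ _ := Finset.sum_le_sum h
  have hsplit : ∑ w ∈ (Finset.univ.erase x₁).erase x,
      ((T.filter (fun y => c w y = 0)).card + (T.filter (fun y => c w y = 1)).card)
      = (∑ w ∈ (Finset.univ.erase x₁).erase x, (T.filter (fun y => c w y = 0)).card)
      + ∑ w ∈ (Finset.univ.erase x₁).erase x, (T.filter (fun y => c w y = 1)).card :=
    Finset.sum_add_distrib
  have hSreq : ∑ w ∈ (Finset.univ.erase x₁).erase x, (T.filter (fun y => c w y = 0)).card = 30 := by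
    omega
  have hSbeq : ∑ w ∈ (Finset.univ.erase x₁).erase x, (T.filter (fun y => c w y = 1)).card = 30 := by
    omega
  -- termwise equality forces each red degree in {1,2}, then = 2
  have hreq : ∀ w ∈ (Finset.univ.erase x₁).erase x,
      2 * (T.filter (fun y => c w y = 0)).card =
        2 + (T.filter (fun y => c w y = 0)).card * ((T.filter (fun y => c w y = 0)).card - 1) := by
    by_contra hne
    push_neg at hne
    obtain ⟨w0, hw0, hne0⟩ := hne
    have hlt := Finset.sum_lt_sum h2le ⟨w0, hw0, lt_of_le_of_ne (aux_2n _) hne0⟩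
    rw [← Finset.mul_sum, Finset.sum_add_distrib, Finset.sum_const, hWcard, smul_eq_mul,
      hSreq] at hlt
    omega
  have hbeq : ∀ w ∈ (Finset.univ.erase x₁).erase x,
      2 * (T.filter (fun y => c w y = 1)).card =
        2 + (T.filter (fun y => c w y = 1)).card * ((T.filter (fun y => c w y = 1)).card - 1) := by
    by_contra hne
    push_neg at hne
    obtain ⟨w0, hw0, hne0⟩ := hne
    have hlt := Finset.sum_lt_sum h2leb ⟨w0, hw0, lt_of_le_of_ne (aux_2n _) hne0⟩
    rw [← Finset.mul_sum, Finset.sum_add_distrib, Finset.sum_const, hWcard, smul_eq_mul,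
      hSbeq] at hlt
    omega
  have hrall : ∀ w ∈ (Finset.univ.erase x₁).erase x, (T.filter (fun y => c w y = 0)).card = 2 := by
    by_contra hne
    push_neg at hne
    obtain ⟨w0, hw0, hne0⟩ := hne
    have h1 : (T.filter (fun y => c w0 y = 0)).card < 2 := by
      rcases aux_2n_eq _ (hreq w0 hw0) with h | h <;> omega
    have hlt : ∑ w ∈ (Finset.univ.erase x₁).erase x, (T.filter (fun y => c w y = 0)).card
        < ∑ _w ∈ (Finset.univ.erase x₁).erase x, 2 := by
      refine Finset.sum_lt_sum (fun i hi => ?_) ⟨w0, hw0, h1⟩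
      rcases aux_2n_eq _ (hreq i hi) with h | h <;> omega
    rw [Finset.sum_const, hWcard, smul_eq_mul, hSreq] at hlt
    omega
  have hball : ∀ w ∈ (Finset.univ.erase x₁).erase x, (T.filter (fun y => c w y = 1)).card = 2 := by
    by_contra hne
    push_neg at hne
    obtain ⟨w0, hw0, hne0⟩ := hne
    have h1 : (T.filter (fun y => c w0 y = 1)).card < 2 := by
      rcases aux_2n_eq _ (hbeq w0 hw0) with h | h <;> omega
    have hlt : ∑ w ∈ (Finset.univ.erase x₁).erase x, (T.filter (fun y => c w y = 1)).card
        < ∑ _w ∈ (Finset.univ.erase x₁).erase x, 2 := by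
      refine Finset.sum_lt_sum (fun i hi => ?_) ⟨w0, hw0, h1⟩
      rcases aux_2n_eq _ (hbeq i hi) with h | h <;> omega
    rw [Finset.sum_const, hWcard, smul_eq_mul, hSbeq] at hlt
    omega
  have hgall : ∀ w ∈ (Finset.univ.erase x₁).erase x, (T.filter (fun y => c w y = 2)).card = 2 := by
    intro w hw
    have := hsum6 w
    have := hrall w hw
    have := hball w hw
    omega
  -- at each u ∈ U, at most 3 red rows, at most 3 blue rows, hence ≥ 9 green rows
  have hredU : ∀ u ∈ Y₁ \ T,
      (((Finset.univ.erase x₁).erase x).filter (fun w => c w u = 0)).card ≤ 3 := by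
    intro u hu
    have hpack := aux_pack (((Finset.univ.erase x₁).erase x).filter (fun w => c w u = 0)) T
      (fun w => T.filter (fun y => c w y = 0))
      (fun a _ => Finset.filter_subset _ _)
      (fun a ha => hrall a (Finset.mem_of_mem_filter a ha))
      ?_
    · rw [hTcard] at hpack; omega
    · intro a ha e he hae
      rw [Finset.disjoint_left]
      intro y hy1 hy2
      rw [Finset.mem_filter] at ha he hy1 hy2
      exact hr2 a e u y hae (fun h => (hUY u hu).2 (h ▸ hy1.1)) ha.2 hy1.2 he.2 hy2.2
  have hblueU : ∀ u ∈ Y₁ \ T,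
      (((Finset.univ.erase x₁).erase x).filter (fun w => c w u = 1)).card ≤ 3 := by
    intro u hu
    have hpack := aux_pack (((Finset.univ.erase x₁).erase x).filter (fun w => c w u = 1)) T
      (fun w => T.filter (fun y => c w y = 1))
      (fun a _ => Finset.filter_subset _ _)
      (fun a ha => hball a (Finset.mem_of_mem_filter a ha))
      ?_
    · rw [hTcard] at hpack; omega
    · intro a ha e he hae
      rw [Finset.disjoint_left]
      intro y hy1 hy2
      rw [Finset.mem_filter] at ha he hy1 hy2
      exact hb2 a e u y hae (fun h => (hUY u hu).2 (h ▸ hy1.1)) ha.2 hy1.2 he.2 hy2.2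
  have hgreenU : ∀ u ∈ Y₁ \ T,
      9 ≤ (((Finset.univ.erase x₁).erase x).filter (fun w => c w u = 2)).card := by
    intro u hu
    have htri := aux_tricolor ((Finset.univ.erase x₁).erase x) (fun w => c w u)
    rw [hWcard] at htri
    have h1 := hredU u hu
    have h2 := hblueU u hu
    omega
  -- at most 3 rows green at any two columns of U
  have hGpair : ∀ u ∈ Y₁ \ T, ∀ v ∈ Y₁ \ T, u ≠ v →
      (((Finset.univ.erase x₁).erase x).filter (fun w => c w u = 2 ∧ c w v = 2)).card ≤ 3 := by
    intro u hu v hv huv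
    have hpack := aux_pack
      (((Finset.univ.erase x₁).erase x).filter (fun w => c w u = 2 ∧ c w v = 2)) T
      (fun w => T.filter (fun y => c w y = 2))
      (fun a _ => Finset.filter_subset _ _)
      (fun a ha => hgall a (Finset.mem_of_mem_filter a ha))
      ?_
    · rw [hTcard] at hpack; omega
    · intro a ha e he hae
      rw [Finset.disjoint_left]
      intro y hy1 hy2
      rw [Finset.mem_filter] at ha he hy1 hy2
      have hyu : y ≠ u := fun h => (hUY u hu).2 (h ▸ hy1.1)
      have hyv : y ≠ v := fun h => (hUY v hv).2 (h ▸ hy1.1)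
      have hBc : ({u, v, y} : Finset (Fin 17)).card = 3 := by
        rw [Finset.card_insert_of_notMem (by simp [huv, hyu.symm]),
          Finset.card_pair (Ne.symm hyv)]
      refine hg3 x₁ a e {u, v, y} (Ne.symm (hWmem a ha.1).2) (Ne.symm (hWmem e he.1).2) hae hBc
        ?_ ?_ ?_ <;> intro z hz <;>
        simp only [Finset.mem_insert, Finset.mem_singleton] at hz <;>
        rcases hz with rfl | rfl | rfl
      · exact hx1g z (hUY z hu).1
      · exact hx1g z (hUY z hv).1
      · exact hx1g z (hTY hy1.1)
      · exact ha.2.1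
      · exact ha.2.2
      · exact hy1.2
      · exact he.2.1
      · exact he.2.2
      · exact hy2.2
  -- final double counting on W × U greens
  have hfin1 : 27 ≤ ∑ w ∈ (Finset.univ.erase x₁).erase x,
      ((Y₁ \ T).filter (fun u => c w u = 2)).card := by
    rw [aux_dcount ((Finset.univ.erase x₁).erase x) (Y₁ \ T) (fun w u => c w u = 2)]
    calc (27 : ℕ) = ∑ _u ∈ Y₁ \ T, 9 := by rw [Finset.sum_const, hUcard, smul_eq_mul]
      _ ≤ _ := Finset.sum_le_sum (fun u hu => hgreenU u hu)
  have hfin2 : ∑ w ∈ (Finset.univ.erase x₁).erase x,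
      ((Y₁ \ T).filter (fun u => c w u = 2)).card
        * (((Y₁ \ T).filter (fun u => c w u = 2)).card - 1) ≤ 18 := by
    have h := aux_pair_count ((Finset.univ.erase x₁).erase x) (Y₁ \ T)
      (fun w u => c w u = 2) 3 ?_
    · rw [hUcard] at h
      simpa using h
    · intro s hs t ht hst
      exact hGpair s hs t ht hst
  have hfin3 := Finset.sum_le_sum (s := (Finset.univ.erase x₁).erase x)
    (f := fun w => 2 * ((Y₁ \ T).filter (fun u => c w u = 2)).card)
    (g := fun w => 2 + ((Y₁ \ T).filter (fun u => c w u = 2)).card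
      * (((Y₁ \ T).filter (fun u => c w u = 2)).card - 1))
    (fun w _ => aux_2n _)
  rw [← Finset.mul_sum, Finset.sum_add_distrib, Finset.sum_const, hWcard, smul_eq_mul] at hfin3
  omega
end

section
/- Let c be a 3-coloring of the edges of K_{17,17} (colors red, blue, green) containing no red K_{2,2}, no blue K_{2,2}, and no green K_{3,3}. Let x₁ be a vertex of the first part X with green degree 9, let Y₁ be its green neighborhood, and suppose Σ_{x ∈ X} |N_g(x) ∩ Y₁| = 73. Then the set C = {x ∈ X : x ≠ x₁ and |N_g(x) ∩ Y₁| = 5} has at most 2 elements. -/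
set_option maxHeartbeats 1000000

open Finset

theorem stmt18 (c : Fin 17 → Fin 17 → Fin 3)
    (hr : ¬(∃ A B : Finset (Fin 17), A.card = 2 ∧ B.card = 2 ∧ ∀ x ∈ A, ∀ y ∈ B, c x y = 0))
    (hb : ¬(∃ A B : Finset (Fin 17), A.card = 2 ∧ B.card = 2 ∧ ∀ x ∈ A, ∀ y ∈ B, c x y = 1))
    (hg : ¬(∃ A B : Finset (Fin 17), A.card = 3 ∧ B.card = 3 ∧ ∀ x ∈ A, ∀ y ∈ B, c x y = 2))
    (x₁ : Fin 17) (Y₁ : Finset (Fin 17))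
    (hY₁ : Y₁ = Finset.univ.filter (fun y : Fin 17 => c x₁ y = 2))
    (hdeg : Y₁.card = 9)
    (hsum : ∑ x : Fin 17, ((Finset.univ.filter (fun y : Fin 17 => c x y = 2)) ∩ Y₁).card = 73) :
    (Finset.univ.filter (fun x : Fin 17 => x ≠ x₁ ∧
      ((Finset.univ.filter (fun y : Fin 17 => c x y = 2)) ∩ Y₁).card = 5)).card ≤ 2 := by
  classical
  by_contra hcon
  push_neg at hcon
  -- abbreviate the green neighborhood within Y₁
  let g : Fin 17 → Finset (Fin 17) :=
    fun x => Finset.univ.filter (fun y : Fin 17 => c x y = 2) ∩ Y₁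
  have hgdef : ∀ x, Finset.univ.filter (fun y : Fin 17 => c x y = 2) ∩ Y₁ = g x :=
    fun _ => rfl
  simp only [hgdef] at hsum hcon
  have hsub : ∀ x, g x ⊆ Y₁ := fun x => inter_subset_right
  have hmem2 : ∀ x y, y ∈ g x → c x y = 2 := by
    intro x y hy
    have := mem_of_mem_inter_left hy
    simpa using this
  have hx1g : ∀ y ∈ Y₁, c x₁ y = 2 := by
    intro y hy; rw [hY₁] at hy; simpa using hy
  -- the key pairwise bound from the absence of a green K_{3,3}
  have hpair : ∀ x x', x ≠ x₁ → x' ≠ x₁ → x ≠ x' → (g x ∩ g x').card ≤ 2 := by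
    intro x x' hx hx' hxx
    by_contra hgt
    push_neg at hgt
    obtain ⟨B, hBsub, hBcard⟩ := Finset.exists_subset_card_eq hgt
    refine hg ⟨{x₁, x, x'}, B, ?_, hBcard, ?_⟩
    · rw [card_insert_of_notMem (by simp [Ne.symm hx, Ne.symm hx']),
        card_insert_of_notMem (by simp [hxx]), card_singleton]
    · intro a ha y hy
      have hyx : y ∈ g x := (mem_inter.mp (hBsub hy)).1
      have hyx' : y ∈ g x' := (mem_inter.mp (hBsub hy)).2
      simp only [mem_insert, mem_singleton] at ha
      rcases ha with rfl | rfl | rfl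
      · exact hx1g y (hsub x hyx)
      · exact hmem2 _ _ hyx
      · exact hmem2 _ _ hyx'
  -- extract three vertices with green trace of size 5
  obtain ⟨T, hTsub, hTcard⟩ := Finset.exists_subset_card_eq hcon
  obtain ⟨x₂, x₃, x₄, h23, h24, h34, rfl⟩ := Finset.card_eq_three.mp hTcard
  have hprop : ∀ x ∈ ({x₂, x₃, x₄} : Finset (Fin 17)), x ≠ x₁ ∧ (g x).card = 5 := by
    intro x hx
    have := hTsub hx
    simpa using this
  obtain ⟨h2ne, h2card⟩ := hprop x₂ (by simp)
  obtain ⟨h3ne, h3card⟩ := hprop x₃ (by simp)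
  obtain ⟨h4ne, h4card⟩ := hprop x₄ (by simp)
  set A := g x₂ with hA
  set B := g x₃ with hB
  set Cs := g x₄ with hCs
  have hAB : (A ∩ B).card ≤ 2 := hpair x₂ x₃ h2ne h3ne h23
  have hAC : (A ∩ Cs).card ≤ 2 := hpair x₂ x₄ h2ne h4ne h24
  have hBC : (B ∩ Cs).card ≤ 2 := hpair x₃ x₄ h3ne h4ne h34
  -- inclusion-exclusion facts
  have e1 : (A ∪ B).card + (A ∩ B).card = A.card + B.card :=
    card_union_add_card_inter A B
  have e2 : (A ∪ B ∪ Cs).card + ((A ∪ B) ∩ Cs).card = (A ∪ B).card + Cs.card :=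
    card_union_add_card_inter _ _
  have e3 : (A ∪ B) ∩ Cs = (A ∩ Cs) ∪ (B ∩ Cs) := union_inter_distrib_right A B Cs
  have e4 : ((A ∩ Cs) ∪ (B ∩ Cs)).card + ((A ∩ Cs) ∩ (B ∩ Cs)).card
      = (A ∩ Cs).card + (B ∩ Cs).card := card_union_add_card_inter _ _
  have e5 : (A ∩ Cs) ∩ (B ∩ Cs) = A ∩ B ∩ Cs := by
    rw [inter_inter_inter_comm, inter_self]
  rw [e5] at e4
  have hUsub : A ∪ B ∪ Cs ⊆ Y₁ := by
    intro a ha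
    simp only [mem_union] at ha
    rcases ha with (ha | ha) | ha
    · exact hsub x₂ ha
    · exact hsub x₃ ha
    · exact hsub x₄ ha
  have hUle : (A ∪ B ∪ Cs).card ≤ 9 := hdeg ▸ card_le_card hUsub
  rw [e3] at e2
  -- forces the exact structure
  have hU9 : (A ∪ B ∪ Cs).card = 9 := by omega
  have hABe : (A ∩ B).card = 2 := by omega
  have hACe : (A ∩ Cs).card = 2 := by omega
  have hBCe : (B ∩ Cs).card = 2 := by omega
  have ht0 : (A ∩ B ∩ Cs).card = 0 := by omega
  have hUeq : A ∪ B ∪ Cs = Y₁ :=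
    eq_of_subset_of_card_le hUsub (by omega)
  have ht0' : A ∩ B ∩ Cs = ∅ := card_eq_zero.mp ht0
  -- heavy and light parts of Y₁
  set H : Finset (Fin 17) := (A ∩ B) ∪ ((A ∩ Cs) ∪ (B ∩ Cs)) with hH
  have hd1 : Disjoint (A ∩ Cs) (B ∩ Cs) := by
    rw [disjoint_iff_inter_eq_empty, e5]; exact ht0'
  have hd2 : Disjoint (A ∩ B) ((A ∩ Cs) ∪ (B ∩ Cs)) := by
    rw [disjoint_left]
    intro a ha hu
    have : a ∈ A ∩ B ∩ Cs := by
      simp only [mem_inter, mem_union] at ha hu ⊢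
      exact ⟨ha, hu.elim And.right And.right⟩
    simp [ht0'] at this
  have hHcard : H.card = 6 := by
    rw [hH, card_union_of_disjoint hd2, card_union_of_disjoint hd1]
    omega
  have hHsub : H ⊆ Y₁ := by
    intro a ha
    simp only [hH, mem_union, mem_inter] at ha
    rcases ha with ⟨ha, _⟩ | ⟨ha, _⟩ | ⟨ha, _⟩ <;>
      [exact hsub x₂ ha; exact hsub x₂ ha; exact hsub x₃ ha]
  set L : Finset (Fin 17) := Y₁ \ H with hL
  have hLcard : L.card = 3 := by
    rw [hL, card_sdiff_of_subset hHsub]; omega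
  -- bounds for every other vertex
  have hkey : ∀ x, x ≠ x₁ → x ≠ x₂ → x ≠ x₃ → x ≠ x₄ →
      (g x).card + (g x ∩ H).card ≤ 6 ∧ (g x ∩ H).card + (g x ∩ L).card = (g x).card := by
    intro x hx1 hx2 hx3 hx4
    have p1 : (g x ∩ A).card ≤ 2 := hpair x x₂ hx1 h2ne hx2
    have p2 : (g x ∩ B).card ≤ 2 := hpair x x₃ hx1 h3ne hx3
    have p3 : (g x ∩ Cs).card ≤ 2 := hpair x x₄ hx1 h4ne hx4
    have hu : (g x ∩ A) ∪ (g x ∩ B) ∪ (g x ∩ Cs) = g x := by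
      ext a
      simp only [mem_union, mem_inter]
      constructor
      · rintro ((⟨h, _⟩ | ⟨h, _⟩) | ⟨h, _⟩) <;> exact h
      · intro ha
        have h2 : a ∈ A ∪ B ∪ Cs := hUeq ▸ hsub x ha
        simp only [mem_union] at h2
        rcases h2 with (h2 | h2) | h2
        · exact Or.inl (Or.inl ⟨ha, h2⟩)
        · exact Or.inl (Or.inr ⟨ha, h2⟩)
        · exact Or.inr ⟨ha, h2⟩
    have hk : g x ∩ H = ((g x ∩ A) ∩ (g x ∩ B)) ∪
        (((g x ∩ A) ∩ (g x ∩ Cs)) ∪ ((g x ∩ B) ∩ (g x ∩ Cs))) := by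
      ext a
      simp only [hH, mem_union, mem_inter]
      constructor
      · rintro ⟨h, (⟨h1, h2⟩ | ⟨h1, h2⟩ | ⟨h1, h2⟩)⟩
        · exact Or.inl ⟨⟨h, h1⟩, ⟨h, h2⟩⟩
        · exact Or.inr (Or.inl ⟨⟨h, h1⟩, ⟨h, h2⟩⟩)
        · exact Or.inr (Or.inr ⟨⟨h, h1⟩, ⟨h, h2⟩⟩)
      · rintro (⟨⟨h, h1⟩, ⟨_, h2⟩⟩ | ⟨⟨h, h1⟩, ⟨_, h2⟩⟩ | ⟨⟨h, h1⟩, ⟨_, h2⟩⟩)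
        · exact ⟨h, Or.inl ⟨h1, h2⟩⟩
        · exact ⟨h, Or.inr (Or.inl ⟨h1, h2⟩)⟩
        · exact ⟨h, Or.inr (Or.inr ⟨h1, h2⟩)⟩
    have f1 : ((g x ∩ A) ∪ (g x ∩ B)).card + ((g x ∩ A) ∩ (g x ∩ B)).card
        = (g x ∩ A).card + (g x ∩ B).card := card_union_add_card_inter _ _
    have f2 : ((g x ∩ A) ∪ (g x ∩ B) ∪ (g x ∩ Cs)).card
        + (((g x ∩ A) ∪ (g x ∩ B)) ∩ (g x ∩ Cs)).card
        = ((g x ∩ A) ∪ (g x ∩ B)).card + (g x ∩ Cs).card := card_union_add_card_inter _ _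
    have f3 : ((g x ∩ A) ∪ (g x ∩ B)) ∩ (g x ∩ Cs)
        = ((g x ∩ A) ∩ (g x ∩ Cs)) ∪ ((g x ∩ B) ∩ (g x ∩ Cs)) :=
      union_inter_distrib_right _ _ _
    have f4 : (((g x ∩ A) ∩ (g x ∩ B)) ∪
        (((g x ∩ A) ∩ (g x ∩ Cs)) ∪ ((g x ∩ B) ∩ (g x ∩ Cs)))).card
        ≤ ((g x ∩ A) ∩ (g x ∩ B)).card
          + (((g x ∩ A) ∩ (g x ∩ Cs)) ∪ ((g x ∩ B) ∩ (g x ∩ Cs))).card :=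
      card_union_le _ _
    rw [hu] at f2
    rw [f3] at f2
    have hHL : (g x ∩ H).card + (g x ∩ L).card = (g x).card := by
      have hdHL : g x ∩ L = (g x) \ H := by
        ext a
        simp only [hL, mem_inter, mem_sdiff]
        constructor
        · exact fun h => ⟨h.1, h.2.2⟩
        · intro ha
          exact ⟨ha.1, hsub x ha.1, ha.2⟩
      rw [hdHL]
      exact card_inter_add_card_sdiff _ _
    constructor
    · rw [hk]
      omega
    · exact hHL
  have hle4 : ∀ x, x ≠ x₁ → x ≠ x₂ → x ≠ x₃ → x ≠ x₄ → (g x).card ≤ 4 := by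
    intro x hx1 hx2 hx3 hx4
    obtain ⟨k1, k2⟩ := hkey x hx1 hx2 hx3 hx4
    have hLle : (g x ∩ L).card ≤ 3 := hLcard ▸ card_le_card inter_subset_right
    omega
  -- sum bookkeeping
  have hg1 : (g x₁).card = 9 := by
    have : g x₁ = Y₁ := by
      show Finset.univ.filter (fun y : Fin 17 => c x₁ y = 2) ∩ Y₁ = Y₁
      rw [← hY₁, inter_self]
    rw [this, hdeg]
  set S : Finset (Fin 17) := insert x₁ {x₂, x₃, x₄} with hS
  have hScard : S.card = 4 := by
    rw [hS, card_insert_of_notMem (by simp [Ne.symm h2ne, Ne.symm h3ne, Ne.symm h4ne]),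
      card_insert_of_notMem (by simp [h23, h24]),
      card_insert_of_notMem (by simp [h34]), card_singleton]
  have hSsum : ∑ x ∈ S, (g x).card = 24 := by
    rw [hS, Finset.sum_insert (by simp [Ne.symm h2ne, Ne.symm h3ne, Ne.symm h4ne]),
      Finset.sum_insert (by simp [h23, h24]),
      Finset.sum_insert (by simp [h34]), Finset.sum_singleton,
      hg1, h2card, h3card, h4card]
    norm_num
  set O : Finset (Fin 17) := Finset.univ \ S with hO
  have hOcard : O.card = 13 := by
    rw [hO, card_sdiff_of_subset (subset_univ _), hScard]
    simp
  have hOsum : ∑ x ∈ O, (g x).card = 49 := by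
    have h' : ∑ x ∈ O, (g x).card + ∑ x ∈ S, (g x).card = ∑ x : Fin 17, (g x).card :=
      Finset.sum_sdiff (subset_univ S)
    omega
  have hOne : ∀ x ∈ O, x ≠ x₁ ∧ x ≠ x₂ ∧ x ≠ x₃ ∧ x ≠ x₄ := by
    intro x hx
    have h2 := (mem_sdiff.mp hx).2
    simp only [hS, mem_insert, mem_singleton] at h2
    push_neg at h2
    exact h2
  -- at least 10 vertices in O have green trace exactly 4
  set D : Finset (Fin 17) := O.filter (fun x => (g x).card = 4) with hD
  have hsplit : ∑ x ∈ D, (g x).card + ∑ x ∈ O.filter (fun x => ¬(g x).card = 4), (g x).card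
      = ∑ x ∈ O, (g x).card := Finset.sum_filter_add_sum_filter_not O _ _
  have hDsum : ∑ x ∈ D, (g x).card = 4 * D.card := by
    rw [Finset.sum_congr rfl (fun x hx => (mem_filter.mp hx).2), Finset.sum_const,
      smul_eq_mul, mul_comm]
  have hNsum : ∑ x ∈ O.filter (fun x => ¬(g x).card = 4), (g x).card
      ≤ 3 * (O.filter (fun x => ¬(g x).card = 4)).card := by
    rw [mul_comm]
    have := Finset.sum_le_card_nsmul (O.filter (fun x => ¬(g x).card = 4))
      (fun x => (g x).card) 3 ?_
    · simpa using this
    · intro x hx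
      obtain ⟨hxO, hxne⟩ := mem_filter.mp hx
      obtain ⟨a1, a2, a3, a4⟩ := hOne x hxO
      have h5 := hle4 x a1 a2 a3 a4
      show (g x).card ≤ 3
      omega
  have hcards : D.card + (O.filter (fun x => ¬(g x).card = 4)).card = 13 := by
    rw [← hOcard, hD]
    exact Finset.card_filter_add_card_filter_not _
  have hD10 : 10 ≤ D.card := by omega
  -- but each member of D contains two light elements, and each light pair
  -- is contained in at most 3 members of D
  have hDsub2 : D ⊆ (Finset.powersetCard 2 L).biUnion
      (fun P => D.filter (fun x => P ⊆ g x)) := by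
    intro x hx
    obtain ⟨hxO, hx4⟩ := mem_filter.mp hx
    obtain ⟨a1, a2, a3, a4⟩ := hOne x hxO
    obtain ⟨k1, k2⟩ := hkey x a1 a2 a3 a4
    have h2L : 2 ≤ (g x ∩ L).card := by omega
    obtain ⟨P, hPsub, hPcard⟩ := Finset.exists_subset_card_eq h2L
    refine mem_biUnion.mpr ⟨P, ?_, ?_⟩
    · exact mem_powersetCard.mpr ⟨hPsub.trans inter_subset_right, hPcard⟩
    · exact mem_filter.mpr ⟨hx, hPsub.trans inter_subset_left⟩
  have hPP : ∀ P ∈ Finset.powersetCard 2 L, (D.filter (fun x => P ⊆ g x)).card ≤ 3 := by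
    intro P hP
    obtain ⟨hPL, hP2⟩ := mem_powersetCard.mp hP
    set Dp := D.filter (fun x => P ⊆ g x) with hDp
    have hdisj : ∀ x ∈ Dp, ∀ x' ∈ Dp, x ≠ x' → Disjoint (g x \ P) (g x' \ P) := by
      intro x hx x' hx' hxx
      obtain ⟨hxD, hxP⟩ := mem_filter.mp hx
      obtain ⟨hx'D, hx'P⟩ := mem_filter.mp hx'
      obtain ⟨a1, _, _, _⟩ := hOne x (mem_filter.mp hxD).1
      obtain ⟨b1, _, _, _⟩ := hOne x' (mem_filter.mp hx'D).1
      have hle2 : (g x ∩ g x').card ≤ 2 := hpair x x' a1 b1 hxx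
      have hPsub : P ⊆ g x ∩ g x' := subset_inter hxP hx'P
      have hPeq : P = g x ∩ g x' :=
        eq_of_subset_of_card_le hPsub (by omega)
      rw [disjoint_left]
      intro a ha ha'
      have h1 := mem_sdiff.mp ha
      have h2 := mem_sdiff.mp ha'
      exact h1.2 (hPeq ▸ mem_inter.mpr ⟨h1.1, h2.1⟩)
    have hbU : (Dp.biUnion (fun x => g x \ P)).card = ∑ x ∈ Dp, (g x \ P).card :=
      card_biUnion hdisj
    have hterm : ∀ x ∈ Dp, (g x \ P).card = 2 := by
      intro x hx
      obtain ⟨hxD, hxP⟩ := mem_filter.mp hx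
      have hx4 : (g x).card = 4 := (mem_filter.mp hxD).2
      rw [card_sdiff_of_subset hxP]
      omega
    have hbsub : Dp.biUnion (fun x => g x \ P) ⊆ Y₁ \ P := by
      intro a ha
      obtain ⟨x, hx, hax⟩ := mem_biUnion.mp ha
      have := mem_sdiff.mp hax
      exact mem_sdiff.mpr ⟨hsub x this.1, this.2⟩
    have hYP : (Y₁ \ P).card = 7 := by
      rw [card_sdiff_of_subset (hPL.trans (sdiff_subset))]
      omega
    have hsum2 : ∑ x ∈ Dp, (g x \ P).card = 2 * Dp.card := by
      rw [Finset.sum_congr rfl hterm, Finset.sum_const, smul_eq_mul, mul_comm]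
    have := card_le_card hbsub
    omega
  have hD9 : D.card ≤ 9 := by
    calc D.card ≤ ((Finset.powersetCard 2 L).biUnion
        (fun P => D.filter (fun x => P ⊆ g x))).card := card_le_card hDsub2
    _ ≤ ∑ P ∈ Finset.powersetCard 2 L, (D.filter (fun x => P ⊆ g x)).card :=
        card_biUnion_le
    _ ≤ (Finset.powersetCard 2 L).card * 3 := by
        rw [← smul_eq_mul]
        exact Finset.sum_le_card_nsmul _ _ 3 hPP
    _ ≤ 9 := by
        rw [card_powersetCard, hLcard]
        norm_num
  omega
end

section
/- Let c be a 3-coloring of the edges of K_{17,17} (colors red, blue, green) containing no red K_{2,2}, no blue K_{2,2}, and no green K_{3,3}. Let x₁ be a vertex of the first part X with green degree 9, let Y₁ be its green neighborhood, and suppose Σ_{x ∈ X} |N_g(x) ∩ Y₁| = 72. Then the set D = {x ∈ X : x ≠ x₁ and |N_g(x) ∩ Y₁| = 5} has at most 3 elements, and the set E = {x ∈ X : x ≠ x₁ and |N_g(x) ∩ Y₁| = 3} has at most 4 elements. -/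
open Finset

lemma indsum (Y s : Finset (Fin 17)) (hs : s ⊆ Y) :
    ∑ y ∈ Y, (if y ∈ s then 1 else 0) = s.card := by
  rw [Finset.sum_ite_mem, Finset.inter_eq_right.mpr hs, Finset.sum_const, smul_eq_mul, mul_one]

lemma indsum2 (Y s t : Finset (Fin 17)) (hs : s ⊆ Y) :
    ∑ y ∈ Y, ((if y ∈ s then 1 else 0) * (if y ∈ t then 1 else 0)) = (s ∩ t).card := by
  have : ∀ y, ((if y ∈ s then 1 else 0) * (if y ∈ t then 1 else 0) : ℕ)
      = if y ∈ s ∩ t then 1 else 0 := by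
    intro y; by_cases h1 : y ∈ s <;> by_cases h2 : y ∈ t <;>
      simp [h1, h2, Finset.mem_inter]
  rw [Finset.sum_congr rfl (fun y _ => this y)]
  exact indsum Y _ (Finset.inter_subset_left.trans hs)

lemma four_sets (Y : Finset (Fin 17)) (hY : Y.card = 9)
    (Ta Tb Tc Td : Finset (Fin 17))
    (sa : Ta ⊆ Y) (sb : Tb ⊆ Y) (sc : Tc ⊆ Y) (sd : Td ⊆ Y)
    (ca : Ta.card = 5) (cb : Tb.card = 5) (cc : Tc.card = 5) (cd : Td.card = 5)
    (iab : (Ta ∩ Tb).card ≤ 2) (iac : (Ta ∩ Tc).card ≤ 2) (iad : (Ta ∩ Td).card ≤ 2)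
    (ibc : (Tb ∩ Tc).card ≤ 2) (ibd : (Tb ∩ Td).card ≤ 2) (icd : (Tc ∩ Td).card ≤ 2) :
    False := by
  have hpt : ∀ y : Fin 17,
      2 * ((if y ∈ Ta then 1 else 0) + (if y ∈ Tb then 1 else 0) +
        (if y ∈ Tc then 1 else 0) + (if y ∈ Td then 1 else 0)) ≤
      ((if y ∈ Ta then 1 else 0) * (if y ∈ Tb then 1 else 0) +
       (if y ∈ Ta then 1 else 0) * (if y ∈ Tc then 1 else 0) +
       (if y ∈ Ta then 1 else 0) * (if y ∈ Td then 1 else 0) +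
       (if y ∈ Tb then 1 else 0) * (if y ∈ Tc then 1 else 0) +
       (if y ∈ Tb then 1 else 0) * (if y ∈ Td then 1 else 0) +
       (if y ∈ Tc then 1 else 0) * (if y ∈ Td then 1 else 0) + 3) := by
    intro y
    by_cases h1 : y ∈ Ta <;> by_cases h2 : y ∈ Tb <;> by_cases h3 : y ∈ Tc <;>
      by_cases h4 : y ∈ Td <;> simp [h1, h2, h3, h4]
  have key := Finset.sum_le_sum (fun y (_ : y ∈ Y) => hpt y)
  rw [← Finset.mul_sum] at key
  simp only [Finset.sum_add_distrib, Finset.sum_const, smul_eq_mul, mul_one] at key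
  rw [indsum Y Ta sa, indsum Y Tb sb, indsum Y Tc sc, indsum Y Td sd,
    indsum2 Y Ta Tb sa, indsum2 Y Ta Tc sa, indsum2 Y Ta Td sa,
    indsum2 Y Tb Tc sb, indsum2 Y Tb Td sb, indsum2 Y Tc Td sc, hY] at key
  omega

theorem stmt19 (c : Fin 17 → Fin 17 → Fin 3)
    (hr : ¬(∃ A B : Finset (Fin 17), A.card = 2 ∧ B.card = 2 ∧ ∀ x ∈ A, ∀ y ∈ B, c x y = 0))
    (hb : ¬(∃ A B : Finset (Fin 17), A.card = 2 ∧ B.card = 2 ∧ ∀ x ∈ A, ∀ y ∈ B, c x y = 1))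
    (hg : ¬(∃ A B : Finset (Fin 17), A.card = 3 ∧ B.card = 3 ∧ ∀ x ∈ A, ∀ y ∈ B, c x y = 2))
    (x₁ : Fin 17) (Y₁ : Finset (Fin 17))
    (hY₁ : Y₁ = Finset.univ.filter (fun y : Fin 17 => c x₁ y = 2))
    (hdeg : Y₁.card = 9)
    (hsum : ∑ x : Fin 17, ((Finset.univ.filter (fun y : Fin 17 => c x y = 2)) ∩ Y₁).card = 72) :
    (Finset.univ.filter (fun x : Fin 17 => x ≠ x₁ ∧
      ((Finset.univ.filter (fun y : Fin 17 => c x y = 2)) ∩ Y₁).card = 5)).card ≤ 3 ∧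
    (Finset.univ.filter (fun x : Fin 17 => x ≠ x₁ ∧
      ((Finset.univ.filter (fun y : Fin 17 => c x y = 2)) ∩ Y₁).card = 3)).card ≤ 4 := by
  classical
  obtain ⟨T, hT⟩ : ∃ T : Fin 17 → Finset (Fin 17),
      ∀ x, T x = (Finset.univ.filter (fun y : Fin 17 => c x y = 2)) ∩ Y₁ :=
    ⟨_, fun _ => rfl⟩
  simp only [← hT] at hsum ⊢
  -- basic facts
  have hTsub : ∀ x, T x ⊆ Y₁ := fun x => (hT x) ▸ Finset.inter_subset_right
  have hTle : ∀ x, (T x).card ≤ 9 := fun x => hdeg ▸ Finset.card_le_card (hTsub x)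
  have hTg : ∀ x y, y ∈ T x → c x y = 2 := by
    intro x y hy
    rw [hT x, Finset.mem_inter, Finset.mem_filter] at hy
    exact hy.1.2
  have hYg : ∀ y, y ∈ Y₁ → c x₁ y = 2 := by
    intro y hy; rw [hY₁, Finset.mem_filter] at hy; exact hy.2
  have hTx₁ : T x₁ = Y₁ := by
    rw [hT, ← hY₁, Finset.inter_self]
  -- pairwise green intersection ≤ 2
  have hpair : ∀ x x', x ≠ x₁ → x' ≠ x₁ → x ≠ x' → (T x ∩ T x').card ≤ 2 := by
    intro x x' hx hx' hxx'
    by_contra h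
    push_neg at h
    obtain ⟨B, hBsub, hB3⟩ := Finset.exists_subset_card_eq h
    refine hg ⟨{x₁, x, x'}, B, ?_, hB3, ?_⟩
    · rw [Finset.card_insert_of_notMem, Finset.card_insert_of_notMem,
        Finset.card_singleton]
      · simp [hxx']
      · simp [Ne.symm hx, Ne.symm hx']
    · intro a ha y hy
      have hy1 : y ∈ T x := (Finset.mem_inter.mp (hBsub hy)).1
      have hy2 : y ∈ T x' := (Finset.mem_inter.mp (hBsub hy)).2
      simp only [Finset.mem_insert, Finset.mem_singleton] at ha
      rcases ha with rfl | rfl | rfl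
      · exact hYg y (hTsub x hy1)
      · exact hTg _ _ hy1
      · exact hTg _ _ hy2
  have hsum11 : ∀ x x', x ≠ x₁ → x' ≠ x₁ → x ≠ x' →
      (T x).card + (T x').card ≤ 11 := by
    intro x x' hx hx' hxx'
    have h1 := Finset.card_union_add_card_inter (T x) (T x')
    have h2 : (T x ∪ T x').card ≤ 9 :=
      hdeg ▸ Finset.card_le_card (Finset.union_subset (hTsub x) (hTsub x'))
    have h3 := hpair x x' hx hx' hxx'
    omega
  -- the vertex set other than x₁
  obtain ⟨U, hU⟩ : ∃ U : Finset (Fin 17), U = Finset.univ.erase x₁ := ⟨_, rfl⟩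
  have hUmem : ∀ x, x ∈ U ↔ x ≠ x₁ := by intro x; simp [hU]
  have hUcard : U.card = 16 := by
    rw [hU, Finset.card_erase_of_mem (Finset.mem_univ x₁)]; simp
  have hsum63 : ∑ x ∈ U, (T x).card = 63 := by
    have := Finset.add_sum_erase Finset.univ (fun x => (T x).card)
      (Finset.mem_univ x₁)
    simp only [hsum, hTx₁, hdeg] at this
    rw [hU]; omega
  -- the sets D and E
  obtain ⟨D, hD⟩ : ∃ D : Finset (Fin 17), D = Finset.univ.filter
      (fun x => x ≠ x₁ ∧ (T x).card = 5) := ⟨_, rfl⟩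
  obtain ⟨E, hE⟩ : ∃ E : Finset (Fin 17), E = Finset.univ.filter
      (fun x => x ≠ x₁ ∧ (T x).card = 3) := ⟨_, rfl⟩
  rw [← hD, ← hE]
  have hDmem : ∀ x, x ∈ D ↔ x ≠ x₁ ∧ (T x).card = 5 := by intro x; simp [hD]
  have hEmem : ∀ x, x ∈ E ↔ x ≠ x₁ ∧ (T x).card = 3 := by intro x; simp [hE]
  have hDU : D ⊆ U := fun x hx => (hUmem x).mpr ((hDmem x).mp hx).1
  have hEU : E ⊆ U := fun x hx => (hUmem x).mpr ((hEmem x).mp hx).1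
  -- D has at most 3 elements (unconditionally)
  have hD3 : D.card ≤ 3 := by
    by_contra h
    push_neg at h
    obtain ⟨S, hSsub, hS4⟩ := Finset.exists_subset_card_eq h
    obtain ⟨a, ha⟩ := Finset.card_pos.mp (by omega : 0 < S.card)
    have hS3 : (S.erase a).card = 3 := by
      rw [Finset.card_erase_of_mem ha, hS4]
    obtain ⟨b, c', d, hbc, hbd, hcd, hSe⟩ := Finset.card_eq_three.mp hS3
    have hbS : b ∈ S.erase a := by rw [hSe]; simp
    have hcS : c' ∈ S.erase a := by rw [hSe]; simp
    have hdS : d ∈ S.erase a := by rw [hSe]; simp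
    have hab : a ≠ b := fun h' => (Finset.mem_erase.mp hbS).1 h'.symm
    have hac : a ≠ c' := fun h' => (Finset.mem_erase.mp hcS).1 h'.symm
    have had : a ≠ d := fun h' => (Finset.mem_erase.mp hdS).1 h'.symm
    have hDa := (hDmem a).mp (hSsub ha)
    have hDb := (hDmem b).mp (hSsub (Finset.mem_of_mem_erase hbS))
    have hDc := (hDmem c').mp (hSsub (Finset.mem_of_mem_erase hcS))
    have hDd := (hDmem d).mp (hSsub (Finset.mem_of_mem_erase hdS))
    exact four_sets Y₁ hdeg (T a) (T b) (T c') (T d)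
      (hTsub a) (hTsub b) (hTsub c') (hTsub d)
      hDa.2 hDb.2 hDc.2 hDd.2
      (hpair a b hDa.1 hDb.1 hab) (hpair a c' hDa.1 hDc.1 hac)
      (hpair a d hDa.1 hDd.1 had) (hpair b c' hDb.1 hDc.1 hbc)
      (hpair b d hDb.1 hDd.1 hbd) (hpair c' d hDc.1 hDd.1 hcd)
  refine ⟨hD3, ?_⟩
  -- indicator sums over U
  have hEsum : ∑ x ∈ U, (if x ∈ E then 1 else 0) = E.card := by
    rw [Finset.sum_ite_mem, Finset.inter_eq_right.mpr hEU, Finset.sum_const,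
      smul_eq_mul, mul_one]
  have hDsum : ∑ x ∈ U, (if x ∈ D then 1 else 0) = D.card := by
    rw [Finset.sum_ite_mem, Finset.inter_eq_right.mpr hDU, Finset.sum_const,
      smul_eq_mul, mul_one]
  by_cases hex : ∃ x0 ∈ U, 6 ≤ (T x0).card
  · obtain ⟨x0, hx0U, hx06⟩ := hex
    have hx0ne : x0 ≠ x₁ := (hUmem x0).mp hx0U
    have hothers : ∀ x, x ∈ U → x ≠ x0 → (T x).card + (T x0).card ≤ 11 :=
      fun x hx hne => hsum11 x x0 ((hUmem x).mp hx) hx0ne hne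
    have hx0sum : ∀ k : ℕ, ∑ x ∈ U, (if x = x0 then k else 0) = k := by
      intro k
      rw [Finset.sum_ite_eq' U x0 (fun _ => k), if_pos hx0U]
    have h69 : (T x0).card = 6 ∨ (T x0).card = 7 ∨ 8 ≤ (T x0).card := by omega
    rcases h69 with h6 | h7 | h8
    · -- card 6 : at most one element of D
      have hD1 : D.card ≤ 1 := by
        by_contra hD1
        push_neg at hD1
        obtain ⟨a, haD, b, hbD, hab⟩ := Finset.one_lt_card.mp hD1
        have key : ∀ z, z ∈ D → Y₁ \ T x0 ⊆ T z := by
          intro z hzD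
          obtain ⟨hz1, hz5⟩ := (hDmem z).mp hzD
          have hzx0 : z ≠ x0 := fun h' => by rw [h', h6] at hz5; omega
          have h1 := Finset.card_sdiff_add_card_inter (T z) (T x0)
          have h2 := hpair z x0 hz1 hx0ne hzx0
          have h3 : T z \ T x0 ⊆ Y₁ \ T x0 :=
            Finset.sdiff_subset_sdiff (hTsub z) (le_refl _)
          have h4 : (Y₁ \ T x0).card = 3 := by
            rw [Finset.card_sdiff_of_subset (hTsub x0), hdeg, h6]
          have h5 : (Y₁ \ T x0).card ≤ (T z \ T x0).card := by omega
          have := Finset.eq_of_subset_of_card_le h3 h5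
          rw [← this]
          exact Finset.sdiff_subset
        have hsub : Y₁ \ T x0 ⊆ T a ∩ T b :=
          Finset.subset_inter (key a haD) (key b hbD)
        have h4 : (Y₁ \ T x0).card = 3 := by
          rw [Finset.card_sdiff_of_subset (hTsub x0), hdeg, h6]
        have h5 := Finset.card_le_card hsub
        have h6' := hpair a b ((hDmem a).mp haD).1 ((hDmem b).mp hbD).1 hab
        omega
      have hpt : ∀ x ∈ U, (T x).card + (if x ∈ E then 1 else 0) ≤
          4 + (if x ∈ D then 1 else 0) + (if x = x0 then 2 else 0) := by
        intro x hx
        by_cases hxx : x = x0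
        · subst hxx
          have hxE : x ∉ E := fun h' => by
            have := ((hEmem x).mp h').2; omega
          simp [hxE, h6]
        · have hle : (T x).card ≤ 5 := by
            have := hothers x hx hxx; omega
          by_cases hxE : x ∈ E
          · have h3' := ((hEmem x).mp hxE).2
            have hxD : x ∉ D := fun h' => by
              have := ((hDmem x).mp h').2; omega
            simp [hxE, hxD, hxx, h3']
          · by_cases hxD : x ∈ D
            · simp [hxE, hxD, hxx, ((hDmem x).mp hxD).2]
            · have h5' : (T x).card ≠ 5 := fun h' =>
                hxD ((hDmem x).mpr ⟨(hUmem x).mp hx, h'⟩)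
              simp only [hxE, hxD, hxx, if_false]
              omega
      have key := Finset.sum_le_sum hpt
      simp only [Finset.sum_add_distrib, Finset.sum_const, smul_eq_mul] at key
      rw [hsum63, hEsum, hDsum, hx0sum 2, hUcard] at key
      omega
    · -- card 7
      have hpt : ∀ x ∈ U, (T x).card + (if x ∈ E then 1 else 0) ≤
          4 + (if x = x0 then 3 else 0) := by
        intro x hx
        by_cases hxx : x = x0
        · subst hxx
          have hxE : x ∉ E := fun h' => by
            have := ((hEmem x).mp h').2; omega
          simp [hxE, h7]
        · have hle : (T x).card ≤ 4 := by
            have := hothers x hx hxx; omega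
          by_cases hxE : x ∈ E
          · have h3' := ((hEmem x).mp hxE).2
            simp [hxE, hxx, h3']
          · simp only [hxE, hxx, if_false]
            omega
      have key := Finset.sum_le_sum hpt
      simp only [Finset.sum_add_distrib, Finset.sum_const, smul_eq_mul] at key
      rw [hsum63, hEsum, hx0sum 3, hUcard] at key
      omega
    · -- card ≥ 8 : contradiction with the total sum
      exfalso
      have hpt : ∀ x ∈ U, (T x).card ≤ 3 + (if x = x0 then 6 else 0) := by
        intro x hx
        by_cases hxx : x = x0
        · subst hxx; have := hTle x; simp; omega
        · have := hothers x hx hxx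
          simp only [hxx, if_false]
          omega
      have key := Finset.sum_le_sum hpt
      simp only [Finset.sum_add_distrib, Finset.sum_const, smul_eq_mul] at key
      rw [hsum63, hx0sum 6, hUcard] at key
      omega
  · push_neg at hex
    have hpt : ∀ x ∈ U, (T x).card + (if x ∈ E then 1 else 0) ≤
        4 + (if x ∈ D then 1 else 0) := by
      intro x hx
      have hle : (T x).card ≤ 5 := by have := hex x hx; omega
      by_cases hxE : x ∈ E
      · have h3' := ((hEmem x).mp hxE).2
        have hxD : x ∉ D := fun h' => by
          have := ((hDmem x).mp h').2; omega
        simp [hxE, hxD, h3']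
      · by_cases hxD : x ∈ D
        · simp [hxE, hxD, ((hDmem x).mp hxD).2]
        · have h5' : (T x).card ≠ 5 := fun h' =>
            hxD ((hDmem x).mpr ⟨(hUmem x).mp hx, h'⟩)
          simp only [hxE, hxD, if_false]
          omega
    have key := Finset.sum_le_sum hpt
    simp only [Finset.sum_add_distrib, Finset.sum_const, smul_eq_mul] at key
    rw [hsum63, hEsum, hDsum, hUcard] at key
    omega
end
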